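/- arXiv:1610.04506 — 2 statements merged into one kernel-verified Lean document; each statement's English description precedes it below -/
import Mathlib

section
/- Let X be a regular T1 space whose co-diagonal Δ^c_X = (X × X) \ Δ_X satisfies: (a) the closure in Δ^c_X of every countable discrete subset of Δ^c_X is Lindelöf, and (b) Δ^c_X is almost discretely Lindelöf. Then X has a small diagonal. -/
open Set Topology Cardinal

universe u

/-- The co-diagonal of `X`: the complement of the diagonal in `X × X`. -/
def codiag (X : Type u) [TopologicalSpace X] : Set (X × X) := {p | p.1 ≠ p.2}

/-- A space is almost discretely Lindelöf if every discrete subset is contained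
in a Lindelöf subset. -/
def AlmostDiscretelyLindelof (Z : Type u) [TopologicalSpace Z] : Prop :=
  ∀ D : Set Z, DiscreteTopology D → ∃ L : Set Z, D ⊆ L ∧ IsLindelof L

/-- `X` has a small diagonal if every uncountable subset of the co-diagonal has
an uncountable subset whose closure misses the diagonal. -/
def HasSmallDiagonal (X : Type u) [TopologicalSpace X] : Prop :=
  ∀ A : Set (X × X), A ⊆ codiag X → ¬ A.Countable →
    ∃ B ⊆ A, ¬ B.Countable ∧ closure B ∩ {p : X × X | p.1 = p.2} = ∅

section Aux

open Filter

set_option linter.unusedSectionVars false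
set_option linter.unusedVariables false

variable {X : Type u} [TopologicalSpace X] [T1Space X] [RegularSpace X]

lemma codiag_isOpen : IsOpen (codiag X) := by
  have : codiag X = (Set.diagonal X)ᶜ := by
    ext p; simp [codiag, Set.diagonal, Prod.ext_iff, eq_comm]
  rw [this]
  exact isClosed_diagonal.isOpen_compl

lemma misses_diag {C : Set (X × X)} (h : closure C ⊆ codiag X) :
    closure C ∩ {p : X × X | p.1 = p.2} = ∅ := by
  ext p
  simp only [mem_inter_iff, mem_setOf_eq, mem_empty_iff_false, iff_false, not_and]
  intro hp
  exact h hp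

/-- Key lemma: an uncountable subset of a Lindelöf subset of the (open) co-diagonal
contains an uncountable subset whose closure misses the diagonal. -/
lemma key_lemma {A S L : Set (X × X)} (hSA : S ⊆ A) (hSL : S ⊆ L)
    (hL : IsLindelof L) (hLc : L ⊆ codiag X) (hS : ¬ S.Countable) :
    ∃ B ⊆ A, ¬ B.Countable ∧ closure B ∩ {p : X × X | p.1 = p.2} = ∅ := by
  have hW : ∀ p : L, ∃ W : Set (X × X), IsOpen W ∧ (p : X × X) ∈ W ∧ closure W ⊆ codiag X := by
    rintro ⟨p, hp⟩
    have hnp : codiag X ∈ 𝓝 p := codiag_isOpen.mem_nhds (hLc hp)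
    obtain ⟨t, ht, htc, hts⟩ := exists_mem_nhds_isClosed_subset hnp
    refine ⟨interior t, isOpen_interior, mem_interior_iff_mem_nhds.2 ht, ?_⟩
    calc closure (interior t) ⊆ closure t := closure_mono interior_subset
    _ = t := htc.closure_eq
    _ ⊆ codiag X := hts
  choose W hWo hWm hWc using hW
  obtain ⟨t, htc, htcov⟩ := hL.elim_countable_subcover W hWo
    (fun q hq => mem_iUnion.2 ⟨⟨q, hq⟩, hWm ⟨q, hq⟩⟩)
  have hScov : S ⊆ ⋃ p ∈ t, S ∩ W p := by
    intro q hq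
    obtain ⟨p, hp, hqp⟩ := mem_iUnion₂.1 (htcov (hSL hq))
    exact mem_iUnion₂.2 ⟨p, hp, hq, hqp⟩
  have : ∃ p ∈ t, ¬ (S ∩ W p).Countable := by
    by_contra h
    push_neg at h
    exact hS ((Set.Countable.biUnion htc h).mono hScov)
  obtain ⟨p, _, hp⟩ := this
  refine ⟨S ∩ W p, fun q hq => hSA hq.1, hp, misses_diag ?_⟩
  exact (closure_mono (inter_subset_right)).trans (hWc p)

/-- A subset of the co-diagonal each of whose points has an open neighbourhood meeting
the set only in that point is discrete (as a subset of the co-diagonal). -/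
lemma disc_lemma {D : Set (X × X)} (hD : D ⊆ codiag X)
    (h : ∀ a ∈ D, ∃ U : Set (X × X), IsOpen U ∧ a ∈ U ∧ U ∩ D = {a}) :
    DiscreteTopology ↥(Subtype.val ⁻¹' D : Set ↥(codiag X)) := by
  rw [discreteTopology_subtype_iff]
  intro x hx
  obtain ⟨U, hUo, hUm, hUD⟩ := h (x : X × X) hx
  have hU' : (Subtype.val ⁻¹' U : Set ↥(codiag X)) ∈ 𝓝 x :=
    (hUo.preimage continuous_subtype_val).mem_nhds hUm
  rw [← Filter.empty_mem_iff_bot]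
  have hmem : (Subtype.val ⁻¹' U ∩ {x}ᶜ) ∩ (Subtype.val ⁻¹' D) ∈
      (𝓝[≠] x) ⊓ 𝓟 (Subtype.val ⁻¹' D : Set ↥(codiag X)) :=
    Filter.inter_mem_inf (Filter.inter_mem_inf hU' (Filter.mem_principal_self _))
      (Filter.mem_principal_self _)
  have hempty : (Subtype.val ⁻¹' U ∩ {x}ᶜ) ∩ (Subtype.val ⁻¹' D : Set ↥(codiag X)) = ∅ := by
    ext y
    simp only [mem_inter_iff, mem_preimage, mem_compl_iff, mem_singleton_iff,
      mem_empty_iff_false, iff_false, not_and]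
    rintro ⟨hyU, hyx⟩ hyD
    have : (y : X × X) ∈ ({(x : X × X)} : Set (X × X)) := hUD ▸ ⟨hyU, hyD⟩
    exact hyx (Subtype.coe_injective this)
  rwa [hempty] at hmem

end Aux

/-- If in the co-diagonal of a regular space the closure of every countable
discrete subset is Lindelöf and the co-diagonal is almost discretely Lindelöf,
then the space has a small diagonal. -/
theorem codiag_almostDiscretelyLindelof_smallDiagonal
    (X : Type u) [TopologicalSpace X] [T1Space X] [RegularSpace X]
    (ha : ∀ D : Set ↥(codiag X), D.Countable → DiscreteTopology D →
      IsLindelof (closure D))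
    (hb : AlmostDiscretelyLindelof ↥(codiag X)) :
    HasSmallDiagonal X := by
  intro A hA hAc
  -- `Nice` families: points of `A` together with small open neighbourhoods,
  -- forming a "separated" family.
  set Nice : Set ((X × X) × Set (X × X)) → Prop := fun E =>
    (∀ e ∈ E, e.1 ∈ A ∧ IsOpen e.2 ∧ e.1 ∈ e.2 ∧ closure e.2 ⊆ codiag X) ∧
    (∀ e ∈ E, ∀ f ∈ E, e ≠ f → e.1 ∉ f.2) with hNice
  obtain ⟨m, hm⟩ : ∃ m, Maximal (· ∈ {E | Nice E}) m := by
    apply zorn_subset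
    intro c hc hchain
    refine ⟨⋃₀ c, ⟨?_, ?_⟩, fun s hs => subset_sUnion_of_mem hs⟩
    · rintro e ⟨E, hE, heE⟩
      exact (hc hE).1 e heE
    · rintro e ⟨E1, hE1, heE1⟩ f ⟨E2, hE2, hfE2⟩ hef
      rcases hchain.total hE1 hE2 with h | h
      · exact (hc hE2).2 e (h heE1) f hfE2 hef
      · exact (hc hE1).2 e heE1 f (h hfE2) hef
  have hmN : Nice m := hm.1
  set D : Set (X × X) := Prod.fst '' m with hD
  have hinj : InjOn Prod.fst m := by
    intro e he f hf hef
    by_contra hne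
    exact (hmN.2 e he f hf hne) (hef ▸ (hmN.1 f hf).2.2.1)
  have hDA : D ⊆ A := by rintro a ⟨e, he, rfl⟩; exact (hmN.1 e he).1
  have hDc : D ⊆ codiag X := fun a haD => hA (hDA haD)
  have hDnbhd : ∀ a ∈ D, ∃ U : Set (X × X), IsOpen U ∧ a ∈ U ∧ U ∩ D = {a} := by
    rintro a ⟨e, he, rfl⟩
    refine ⟨e.2, (hmN.1 e he).2.1, (hmN.1 e he).2.2.1, ?_⟩
    ext b
    simp only [mem_inter_iff, mem_singleton_iff]
    constructor
    · rintro ⟨hb2, f, hf, rfl⟩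
      by_contra hne
      have : f ≠ e := fun h => hne (by rw [h])
      exact (hmN.2 f hf e he this) hb2
    · rintro rfl
      exact ⟨(hmN.1 e he).2.2.1, ⟨e, he, rfl⟩⟩
  have hdisc : DiscreteTopology ↥(Subtype.val ⁻¹' D : Set ↥(codiag X)) :=
    disc_lemma hDc hDnbhd
  by_cases hmc : m.Countable
  · -- `m` countable: by maximality `A` is covered by `closure D` and the countably many
    -- neighbourhoods in `m`.
    have hDcnt : D.Countable := hmc.image _
    have hcover : A ⊆ closure D ∪ ⋃ e ∈ m, e.2 := by
      by_contra h
      rw [not_subset] at h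
      obtain ⟨x, hxA, hx⟩ := h
      simp only [mem_union, mem_iUnion, not_or, not_exists] at hx
      obtain ⟨hxD, hxU⟩ := hx
      have hO : IsOpen (codiag X ∩ (closure D)ᶜ) :=
        codiag_isOpen.inter isClosed_closure.isOpen_compl
      have hxO : x ∈ codiag X ∩ (closure D)ᶜ := ⟨hA hxA, hxD⟩
      obtain ⟨t, ht, htc, hts⟩ := exists_mem_nhds_isClosed_subset (hO.mem_nhds hxO)
      set V : Set (X × X) := interior t with hV
      have hxV : x ∈ V := mem_interior_iff_mem_nhds.2 ht
      have hVt : closure V ⊆ t := by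
        calc closure V ⊆ closure t := closure_mono interior_subset
        _ = t := htc.closure_eq
      have hnotmem : (x, V) ∉ m := by
        intro hmem
        exact hxD (subset_closure ⟨(x, V), hmem, rfl⟩)
      have hnice : Nice (insert (x, V) m) := by
        constructor
        · rintro e (rfl | he)
          · exact ⟨hxA, isOpen_interior, hxV, hVt.trans (hts.trans inter_subset_left)⟩
          · exact hmN.1 e he
        · rintro e (rfl | he) f (rfl | hf) hef
          · exact absurd rfl hef
          · exact hxU f hf
          · -- e ∈ m, f = (x, V) : e.1 ∉ V
            intro hmem
            have he1 : e.1 ∈ closure D := subset_closure ⟨e, he, rfl⟩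
            have : e.1 ∈ (closure D)ᶜ :=
              (hts.trans inter_subset_right) (interior_subset hmem)
            exact this he1
          · exact hmN.2 e he f hf hef
      have : insert (x, V) m ⊆ m := hm.2 hnice (subset_insert _ _)
      exact hnotmem (this (mem_insert _ _))
    -- Split `A` along this countable cover.
    by_cases hc1 : (A ∩ closure D).Countable
    · have : ∃ e ∈ m, ¬ (A ∩ e.2).Countable := by
        by_contra h
        push_neg at h
        apply hAc
        have : A ⊆ (A ∩ closure D) ∪ ⋃ e ∈ m, A ∩ e.2 := by
          intro q hq
          rcases hcover hq with hq' | hq'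
          · exact Or.inl ⟨hq, hq'⟩
          · obtain ⟨e, he, hqe⟩ := mem_iUnion₂.1 hq'
            exact Or.inr (mem_iUnion₂.2 ⟨e, he, hq, hqe⟩)
        exact (hc1.union (Set.Countable.biUnion hmc h)).mono this
      obtain ⟨e, he, hec⟩ := this
      refine ⟨A ∩ e.2, inter_subset_left, hec, misses_diag ?_⟩
      exact (closure_mono inter_subset_right).trans (hmN.1 e he).2.2.2
    · -- `A ∩ closure D` is uncountable; it sits inside the Lindelöf set `closure D'`.
      set D' : Set ↥(codiag X) := Subtype.val ⁻¹' D with hD'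
      have hD'c : D'.Countable := hDcnt.preimage Subtype.coe_injective
      have hLin : IsLindelof (closure D') := ha D' hD'c hdisc
      have hvalD' : Subtype.val '' D' = D := by
        rw [Subtype.image_preimage_coe]
        exact inter_eq_self_of_subset_right hDc
      set L' : Set (X × X) := Subtype.val '' closure D' with hL'
      have hL'lin : IsLindelof L' := hLin.image continuous_subtype_val
      have hL'c : L' ⊆ codiag X := by rintro p ⟨q, _, rfl⟩; exact q.2
      have hSL' : A ∩ closure D ⊆ L' := by
        rintro p ⟨hpA, hpD⟩
        refine ⟨⟨p, hA hpA⟩, ?_, rfl⟩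
        rw [closure_subtype, hvalD']
        exact hpD
      exact key_lemma inter_subset_left hSL' hL'lin hL'c hc1
  · -- `m` uncountable: `D` is an uncountable discrete subset; use (b).
    have hDnc : ¬ D.Countable := fun h =>
      hmc (countable_of_injective_of_countable_image hinj h)
    set D' : Set ↥(codiag X) := Subtype.val ⁻¹' D with hD'
    obtain ⟨L, hDL, hLlin⟩ := hb D' hdisc
    set L' : Set (X × X) := Subtype.val '' L with hL'
    have hL'lin : IsLindelof L' := hLlin.image continuous_subtype_val
    have hL'c : L' ⊆ codiag X := by rintro p ⟨q, _, rfl⟩; exact q.2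
    have hDL' : D ⊆ L' := fun a haD => ⟨⟨a, hDc haD⟩, hDL haD, rfl⟩
    exact key_lemma hDA hDL' hL'lin hL'c hDnc
end

section
/- Let X be a compact Hausdorff space that is ω-monolithic (the closure of every countable subset of X has a countable network) and has countable tightness (whenever x lies in the closure of a set A ⊆ X, there is a countable B ⊆ A with x in the closure of B). If the co-diagonal Δ^c_X = (X × X) \ Δ_X is almost discretely Lindelöf, then X is metrizable. -/
open Set Filter Topology Cardinal

universe u

/-- `X` has a countable network: a countable family of subsets such that every
open set is a union of members of the family. -/
def HasCountableNetwork (X : Type u) [TopologicalSpace X] : Prop :=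
  ∃ 𝒩 : Set (Set X), 𝒩.Countable ∧ ∀ U : Set X, IsOpen U → ∃ 𝒩' ⊆ 𝒩, U = ⋃₀ 𝒩'

/-- A space has countable tightness if every point in the closure of a set lies
in the closure of a countable subset. -/
def CountableTightness (X : Type u) [TopologicalSpace X] : Prop :=
  ∀ (A : Set X) (x : X), x ∈ closure A →
    ∃ B ⊆ A, B.Countable ∧ x ∈ closure B

/-!
If `X` is separable, then `X` is the closure of a countable set, so it has a countable network;
a countable network yields a countable family of open sets separating points, which generates a
coarser Hausdorff topology, and a compact Hausdorff topology has no strictly coarser Hausdorff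
topology, so `X` is second countable.

Otherwise, recursion along `ω₁` produces pairs `(x α, z α)` and countable sets `A α` with
`x α ∉ closure (A α) ∋ z α`, where `A α` contains all earlier pairs, together with a countable
family `𝒩 α` of open sets separating the points of the closure of `A α ∪ {x α}` (this is where
ω-monolithicity enters). Since `A α` also meets every nonempty finite intersection of earlier
members of the families `𝒩 β`, compactness allows choosing `z α` in `closure U` whenever
`x α ∈ U ∈ 𝒩 β` for some `β < α`. The pairs form an uncountable discrete subset of the
co-diagonal, so a Lindelöf subset of the co-diagonal containing them gives an off-diagonal point
`q` at which the pairs accumulate along the cocountable filter. By countable tightness both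
coordinates of `q` lie in the closure of some `A μ`, so they are separated by `U, V ∈ 𝒩 μ`;
a later pair in `U × V` contradicts `z α ∈ closure U`.
-/

instance Filter.countableInterFilter_cocountable {α : Type*} :
    CountableInterFilter (cocountable : Filter α) :=
  cardinalInterFilter_aleph_one_iff.1 inferInstance

instance Filter.cocountable_neBot {α : Type*} [Uncountable α] :
    NeBot (cocountable : Filter α) := by
  simpa using (cocardinal_inf_principal_neBot_iff (s := (univ : Set α))).2 (by simp)

theorem MapClusterPt.mem_closure_range {Z ι : Type*} [TopologicalSpace Z] {F : Filter ι}
    {g : ι → Z} {q : Z} (h : MapClusterPt q F g) : q ∈ closure (range g) :=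
  mem_closure_iff_clusterPt.2 (ClusterPt.mono h (le_principal_iff.2 range_mem_map))

theorem Set.Countable.exists_countable_inter_nonempty {X : Type*} {𝒢 : Set (Set X)}
    (h𝒢 : 𝒢.Countable) : ∃ B : Set X, B.Countable ∧ ∀ G ∈ 𝒢, G.Nonempty → (G ∩ B).Nonempty := by
  have : Countable {G | G ∈ 𝒢 ∧ G.Nonempty} := (h𝒢.mono fun _ hG => hG.1).to_subtype
  exact ⟨range fun G : {G | G ∈ 𝒢 ∧ G.Nonempty} => G.2.2.some, countable_range _,
    fun G hG hne => ⟨_, hne.some_mem, ⟨G, hG, hne⟩, rfl⟩⟩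

section CountableInitialSegments

variable {W : Type*} [LinearOrder W]

theorem exists_forall_lt_of_countable_Iio [Uncountable W] (hW : ∀ w : W, (Iio w).Countable)
    {ι : Type*} [Countable ι] (k : ι → W) : ∃ μ, ∀ i, k i < μ := by
  by_contra! h
  apply not_countable_univ (α := W)
  refine (countable_iUnion fun i => ?_ : (⋃ i, Iic (k i)).Countable).mono ?_
  · exact Iio_insert (a := k i) ▸ (hW (k i)).insert _
  · intro μ _
    obtain ⟨i, hi⟩ := h μ
    exact mem_iUnion.2 ⟨i, hi⟩

theorem MapClusterPt.exists_gt_mem {Z : Type*} [TopologicalSpace Z] {g : W → Z} {q : Z}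
    (h : MapClusterPt q cocountable g) (hW : ∀ w : W, (Iio w).Countable) {O : Set Z}
    (hO : O ∈ 𝓝 q) (μ : W) : ∃ α, μ < α ∧ g α ∈ O := by
  have hμ : ∀ᶠ α in cocountable, μ < α :=
    mem_cocountable.2 (compl_Ioi (a := μ) ▸ Iio_insert (a := μ) ▸ (hW μ).insert μ)
  obtain ⟨α, hαO, hμα⟩ := ((h.frequently hO).and_eventually hμ).exists
  exact ⟨α, hμα, hαO⟩

theorem CountableTightness.exists_mem_closure_image_Iio {X : Type u} [TopologicalSpace X]
    (ht : CountableTightness X) [Uncountable W] (hW : ∀ w : W, (Iio w).Countable) {g : W → X}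
    {y : X} (hy : y ∈ closure (range g)) : ∃ μ, y ∈ closure (g '' Iio μ) := by
  obtain ⟨B, hBg, hBc, hyB⟩ := ht _ y hy
  have : Countable B := hBc.to_subtype
  choose k hk using fun b : B => hBg b.2
  obtain ⟨μ, hμ⟩ := exists_forall_lt_of_countable_Iio hW k
  exact ⟨μ, closure_mono (fun b hb => (⟨k ⟨b, hb⟩, hμ _, hk _⟩ : b ∈ g '' Iio μ)) hyB⟩

end CountableInitialSegments

instance : Uncountable (ℵ₁ : Cardinal.{u}).ord.ToType :=
  aleph0_lt_mk_iff.1 (by rw [mk_ord_toType]; exact aleph0_lt_aleph_one)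

theorem countable_Iio_aleph_one_ord_toType (w : (ℵ₁ : Cardinal.{u}).ord.ToType) :
    (Iio w).Countable := by
  have hw := mk_Iio_lt w (by rw [mk_ord_toType, Ordinal.type_toType])
  rw [mk_ord_toType] at hw
  exact le_aleph0_iff_set_countable.1 (lt_aleph_one_iff.1 hw)

theorem WellFoundedLT.exists_forall_image_Iio {W T : Type*} [Preorder W] [WellFoundedLT W]
    {P : Set T → T → Prop} (hP : ∀ S, ∃ t, P S t) : ∃ f : W → T, ∀ w, P (f '' Iio w) (f w) := by
  choose next hnext using hP
  let f : W → T := WellFoundedLT.fix fun w hist => next (range fun b : Iio w => hist b b.2)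
  refine ⟨f, fun w => ?_⟩
  have hfw : f w = next (f '' Iio w) := by
    rw [image_eq_range]
    exact WellFoundedLT.fix_eq _ w
  exact hfw ▸ hnext _

section Separation

variable {X : Type*} [TopologicalSpace X]

structure IsSeparating (𝒮 : Set (Set X)) (K : Set X) : Prop where
  isOpen : ∀ U ∈ 𝒮, IsOpen U
  separates : ∀ u ∈ K, ∀ v ∈ K, u ≠ v → ∃ U ∈ 𝒮, ∃ V ∈ 𝒮, u ∈ U ∧ v ∈ V ∧ Disjoint U V

theorem HasCountableNetwork.exists_countable_network_at {K : Set X}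
    (hK : HasCountableNetwork K) : ∃ 𝒩 : Set (Set X), 𝒩.Countable ∧
      ∀ u ∈ K, ∀ A, IsOpen A → u ∈ A → ∃ M ∈ 𝒩, u ∈ M ∧ M ⊆ A := by
  obtain ⟨𝒩, h𝒩c, h𝒩⟩ := hK
  refine ⟨image Subtype.val '' 𝒩, h𝒩c.image _, fun u hu A hA huA => ?_⟩
  obtain ⟨𝒩', h𝒩'𝒩, hA'⟩ := h𝒩 _ (hA.preimage continuous_subtype_val)
  have hu' : (⟨u, hu⟩ : K) ∈ ⋃₀ 𝒩' := hA' ▸ huA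
  obtain ⟨M, hM, huM⟩ := hu'
  exact ⟨_, mem_image_of_mem _ (h𝒩'𝒩 hM), mem_image_of_mem _ huM,
    image_subset_iff.2 (hA' ▸ subset_sUnion_of_mem hM)⟩

theorem HasCountableNetwork.exists_countable_isSeparating [T4Space X] {K : Set X}
    (hK : HasCountableNetwork K) : ∃ 𝒮 : Set (Set X), 𝒮.Countable ∧ IsSeparating 𝒮 K := by
  obtain ⟨𝒩, h𝒩c, h𝒩⟩ := hK.exists_countable_network_at
  set P := {q ∈ 𝒩 ×ˢ 𝒩 | Disjoint (closure q.1) (closure q.2)}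
  have hPc : P.Countable := (h𝒩c.prod h𝒩c).mono fun q hq => hq.1
  choose! U V hU hV hqU hqV hUV using
    fun q (hq : q ∈ P) => normal_separation isClosed_closure isClosed_closure hq.2
  refine ⟨U '' P ∪ V '' P, (hPc.image U).union (hPc.image V), ⟨?_, ?_⟩⟩
  · rintro _ (⟨q, hq, rfl⟩ | ⟨q, hq, rfl⟩)
    exacts [hU q hq, hV q hq]
  · intro u hu v hv huv
    obtain ⟨A, huA, hA, B, hvB, hB, hAB⟩ := exists_open_nhds_disjoint_closure huv
    obtain ⟨M, hM, huM, hMA⟩ := h𝒩 u hu A hA huA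
    obtain ⟨N, hN, hvN, hNB⟩ := h𝒩 v hv B hB hvB
    have hq : (M, N) ∈ P := ⟨⟨hM, hN⟩, hAB.mono (closure_mono hMA) (closure_mono hNB)⟩
    exact ⟨_, .inl (mem_image_of_mem U hq), _, .inr (mem_image_of_mem V hq),
      hqU _ hq (subset_closure huM), hqV _ hq (subset_closure hvN), hUV _ hq⟩

open TopologicalSpace in
theorem IsSeparating.metrizableSpace [T2Space X] [CompactSpace X] {𝒮 : Set (Set X)}
    (h𝒮c : 𝒮.Countable) (h𝒮 : IsSeparating 𝒮 Set.univ) : MetrizableSpace X := by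
  have hT2 : @T2Space X (generateFrom 𝒮) := @T2Space.mk X (generateFrom 𝒮) fun u v huv => by
    obtain ⟨U, hU, V, hV, huU, hvV, hUV⟩ := h𝒮.separates u trivial v trivial huv
    exact ⟨U, V, .basic U hU, .basic V hV, huU, hvV, hUV⟩
  have hcont : Continuous[_, generateFrom 𝒮] id := continuous_id_of_le (le_generateFrom h𝒮.isOpen)
  have hid : @IsInducing X X _ (generateFrom 𝒮) id :=
    @IsClosedEmbedding.isInducing X X id _ (generateFrom 𝒮)
      (@Continuous.isClosedEmbedding X X _ (generateFrom 𝒮) _ hT2 id hcont Function.injective_id)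
  have : SecondCountableTopology X := @IsInducing.secondCountableTopology X X _ id (generateFrom 𝒮)
    (@SecondCountableTopology.mk X (generateFrom 𝒮) ⟨𝒮, h𝒮c, rfl⟩) hid
  exact metrizableSpace_of_t3_secondCountable X

theorem exists_mem_closure_forall_mem_closure [CompactSpace X] {A : Set X} {𝒰 : Set (Set X)}
    (h : ∀ F ⊆ 𝒰, F.Finite → (A ∩ ⋂₀ F).Nonempty) :
    ∃ z ∈ closure A, ∀ U ∈ 𝒰, z ∈ closure U := by
  obtain ⟨z, hzA, hz⟩ := isClosed_closure.isCompact.inter_iInter_nonempty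
    (fun U : 𝒰 => closure (U : Set X)) (fun _ => isClosed_closure) fun F => by
      obtain ⟨a, haA, haF⟩ := h (Subtype.val '' (F : Set 𝒰)) (image_subset_iff.2 fun U _ => U.2)
        (F.finite_toSet.image _)
      exact ⟨a, subset_closure haA,
        mem_iInter₂.2 fun U hU => subset_closure (haF _ (mem_image_of_mem _ hU))⟩
  exact ⟨z, hzA, fun U hU => mem_iInter.1 hz ⟨U, hU⟩⟩

end Separation

section Stages

variable {X : Type u} [TopologicalSpace X]

structure Stage (X : Type u) where
  x : X
  z : X
  A : Set X
  opens : Set (Set X)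
  countable_opens : opens.Countable

def Stage.pair (t : Stage X) : X × X := (t.x, t.z)

structure IsNextStage (S : Set (Stage X)) (t : Stage X) : Prop where
  prev_mem : ∀ s ∈ S, s.x ∈ t.A ∧ s.z ∈ t.A
  x_notMem : t.x ∉ closure t.A
  z_mem : t.z ∈ closure t.A
  z_mem_closure : ∀ s ∈ S, ∀ U ∈ s.opens, t.x ∈ U → t.z ∈ closure U
  separating : IsSeparating t.opens (closure (insert t.x t.A))

theorem IsNextStage.x_ne_z {S : Set (Stage X)} {t : Stage X} (ht : IsNextStage S t) :
    t.x ≠ t.z :=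
  fun h => ht.x_notMem (h ▸ ht.z_mem)

theorem IsNextStage.exists_separating_pair {S : Set (Stage X)} {t : Stage X}
    (ht : IsNextStage S t) : ∃ U ∈ t.opens, ∃ V ∈ t.opens, t.x ∈ U ∧ t.z ∈ V ∧ Disjoint U V :=
  ht.separating.separates _ (subset_closure (mem_insert _ _)) _
    (closure_mono (subset_insert _ _) ht.z_mem) ht.x_ne_z

theorem exists_isNextStage [T2Space X] [CompactSpace X]
    (hmono : ∀ A : Set X, A.Countable → HasCountableNetwork (closure A))
    (hns : ∀ A : Set X, A.Countable → closure A ≠ Set.univ) {S : Set (Stage X)}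
    (hS : S.Countable) : ∃ t, IsNextStage S t := by
  set 𝒪 := ⋃ s ∈ S, s.opens
  have h𝒪 : 𝒪.Countable := hS.biUnion fun s _ => s.countable_opens
  obtain ⟨B, hBc, hB⟩ :=
    ((countable_ofPred_finite_subset h𝒪).image sInter).exists_countable_inter_nonempty
  set A := B ∪ ⋃ s ∈ S, {s.x, s.z}
  have hAc : A.Countable := hBc.union (hS.biUnion fun s _ => (countable_singleton _).insert _)
  obtain ⟨x, hx⟩ := (ne_univ_iff_exists_notMem _).1 (hns A hAc)
  obtain ⟨z, hzA, hz⟩ := exists_mem_closure_forall_mem_closure (A := A) (𝒰 := {U ∈ 𝒪 | x ∈ U})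
    fun F hF hFfin => by
      obtain ⟨b, hbF, hbB⟩ := hB (⋂₀ F) ⟨F, ⟨hFfin, fun U hU => (hF hU).1⟩, rfl⟩
        ⟨x, fun U hU => (hF hU).2⟩
      exact ⟨b, .inl hbB, hbF⟩
  obtain ⟨𝒩, h𝒩c, h𝒩⟩ := (hmono _ (hAc.insert x)).exists_countable_isSeparating
  exact ⟨⟨x, z, A, 𝒩, h𝒩c⟩,
    ⟨fun s hs => ⟨.inr (mem_biUnion hs (by simp)), .inr (mem_biUnion hs (by simp))⟩, hx, hzA,
      fun s hs U hU hxU => hz U ⟨mem_biUnion hs hU, hxU⟩, h𝒩⟩⟩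

variable {W : Type*} [LinearOrder W]

def IsStageSequence (f : W → Stage X) : Prop := ∀ w, IsNextStage (f '' Iio w) (f w)

theorem exists_isStageSequence [T2Space X] [CompactSpace X] [WellFoundedLT W]
    (hW : ∀ w : W, (Iio w).Countable)
    (hmono : ∀ A : Set X, A.Countable → HasCountableNetwork (closure A))
    (hns : ∀ A : Set X, A.Countable → closure A ≠ Set.univ) :
    ∃ f : W → Stage X, IsStageSequence f := by
  obtain ⟨t₀, -⟩ := exists_isNextStage hmono hns (countable_empty (α := Stage X))
  obtain ⟨f, hf⟩ := WellFoundedLT.exists_forall_image_Iio (W := W)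
    (P := fun S t => S.Countable → IsNextStage S t) fun S => by
      by_cases hS : S.Countable
      · exact (exists_isNextStage hmono hns hS).imp fun _ h _ => h
      · exact ⟨t₀, fun h => absurd h hS⟩
  exact ⟨f, fun w => hf w ((hW w).image f)⟩

namespace IsStageSequence

variable {f : W → Stage X} {α β : W}

theorem x_mem (hf : IsStageSequence f) (h : β < α) : (f β).x ∈ (f α).A :=
  ((hf α).prev_mem _ (mem_image_of_mem f h)).1

theorem z_mem (hf : IsStageSequence f) (h : β < α) : (f β).z ∈ (f α).A :=
  ((hf α).prev_mem _ (mem_image_of_mem f h)).2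

theorem z_mem_closure (hf : IsStageSequence f) (h : β < α) {U : Set X} (hU : U ∈ (f β).opens)
    (hx : (f α).x ∈ U) : (f α).z ∈ closure U :=
  (hf α).z_mem_closure _ (mem_image_of_mem f h) U hU hx

theorem isDiscrete_range (hf : IsStageSequence f) : IsDiscrete (range fun w => (f w).pair) := by
  refine isDiscrete_iff_forall_mem_exists_isOpen.2 ?_
  rintro _ ⟨α, rfl⟩
  obtain ⟨U, hU, V, hV, hxU, hzV, hUV⟩ := (hf α).exists_separating_pair
  have hUo := (hf α).separating.isOpen U hU
  have hVo := (hf α).separating.isOpen V hV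
  refine ⟨((closure (f α).A)ᶜ ∩ U) ×ˢ V, (isClosed_closure.isOpen_compl.inter hUo).prod hVo,
    subset_antisymm ?_ (singleton_subset_iff.2 ⟨⟨⟨(hf α).x_notMem, hxU⟩, hzV⟩, α, rfl⟩)⟩
  rintro _ ⟨⟨⟨hxA, hxU'⟩, hzV'⟩, β, rfl⟩
  rcases lt_trichotomy β α with hβα | rfl | hαβ
  · exact absurd (subset_closure (hf.x_mem hβα)) hxA
  · rfl
  · exact absurd hzV' (disjoint_left.1 (hUV.closure_left hVo) (hf.z_mem_closure hαβ hU hxU'))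

theorem not_mapClusterPt (hf : IsStageSequence f) [Uncountable W]
    (hW : ∀ w : W, (Iio w).Countable) (ht : CountableTightness X) {q : X × X} (hq : q.1 ≠ q.2) :
    ¬ MapClusterPt q cocountable fun w => (f w).pair := by
  intro hcl
  obtain ⟨μ₁, h₁⟩ := ht.exists_mem_closure_image_Iio hW
    (hcl.continuousAt_comp continuous_fst.continuousAt).mem_closure_range
  obtain ⟨μ₂, h₂⟩ := ht.exists_mem_closure_image_Iio hW
    (hcl.continuousAt_comp continuous_snd.continuousAt).mem_closure_range
  set μ := max μ₁ μ₂
  have hq₁ : q.1 ∈ closure (insert (f μ).x (f μ).A) := by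
    refine closure_mono ?_ h₁
    rintro _ ⟨β, hβ, rfl⟩
    exact mem_insert_of_mem _ (hf.x_mem (lt_max_of_lt_left hβ))
  have hq₂ : q.2 ∈ closure (insert (f μ).x (f μ).A) := by
    refine closure_mono ?_ h₂
    rintro _ ⟨β, hβ, rfl⟩
    exact mem_insert_of_mem _ (hf.z_mem (lt_max_of_lt_right hβ))
  obtain ⟨U, hU, V, hV, hqU, hqV, hUV⟩ := (hf μ).separating.separates _ hq₁ _ hq₂ hq
  have hUo := (hf μ).separating.isOpen U hU
  have hVo := (hf μ).separating.isOpen V hV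
  obtain ⟨α, hμα, hxU, hzV⟩ :=
    hcl.exists_gt_mem hW (prod_mem_nhds (hUo.mem_nhds hqU) (hVo.mem_nhds hqV)) μ
  exact disjoint_left.1 (hUV.closure_left hVo) (hf.z_mem_closure hμα hU hxU) hzV

end IsStageSequence

theorem not_almostDiscretelyLindelof_codiag [T2Space X] [CompactSpace X]
    (hmono : ∀ A : Set X, A.Countable → HasCountableNetwork (closure A))
    (ht : CountableTightness X) (hns : ∀ A : Set X, A.Countable → closure A ≠ Set.univ) :
    ¬ AlmostDiscretelyLindelof (codiag X) := by
  intro h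
  let Ω := (ℵ₁ : Cardinal.{u}).ord.ToType
  obtain ⟨f, hf⟩ := exists_isStageSequence countable_Iio_aleph_one_ord_toType hmono hns
  have : DiscreteTopology (range fun w => (f w).pair) := hf.isDiscrete_range.to_subtype
  obtain ⟨L, hDL, hL⟩ := h _ (DiscreteTopology.preimage_of_continuous_injective
    (range fun w => (f w).pair) continuous_subtype_val Subtype.val_injective)
  let p : Ω → codiag X := fun w => ⟨(f w).pair, (hf w).x_ne_z⟩
  obtain ⟨q, -, hq⟩ : ∃ q ∈ L, MapClusterPt q cocountable p :=
    hL (le_principal_iff.2 (mem_map.2 (univ_mem' fun w => hDL ⟨w, rfl⟩)))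
  exact hf.not_mapClusterPt countable_Iio_aleph_one_ord_toType ht q.2
    (hq.continuousAt_comp continuous_subtype_val.continuousAt)

end Stages

/-- An ω-monolithic compact Hausdorff space of countable tightness whose
co-diagonal is almost discretely Lindelöf is metrizable. -/
theorem monolithic_compact_codiag_almostDiscretelyLindelof_metrizable
    (X : Type u) [TopologicalSpace X] [T2Space X] [CompactSpace X]
    (hmono : ∀ A : Set X, A.Countable → HasCountableNetwork ↥(closure A))
    (ht : CountableTightness X)
    (h : AlmostDiscretelyLindelof ↥(codiag X)) :
    TopologicalSpace.MetrizableSpace X := by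
  by_cases hsep : ∃ A : Set X, A.Countable ∧ closure A = Set.univ
  · obtain ⟨A, hAc, hA⟩ := hsep
    obtain ⟨𝒮, h𝒮c, h𝒮⟩ := (hmono A hAc).exists_countable_isSeparating
    exact (hA ▸ h𝒮).metrizableSpace h𝒮c
  · exact absurd h (not_almostDiscretelyLindelof_codiag hmono ht
      fun A hAc hA => hsep ⟨A, hAc, hA⟩)
end
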